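/- Let ρ, T, Λ > 0 and κ ∈ (0, 1/(2ρΛT)). Define A = κ − (1/(2Λ√ρ))·( coth(√ρT) + tanh²(√ρT/2)/(√ρT − 2 tanh(√ρT/2)) ), B = 1/(2ΛT) − √ρ/(2Λ(√ρT − 2 tanh(√ρT/2))), C = tanh(√ρT/2)/(2Λ(√ρT − 2 tanh(√ρT/2))). Then AB − C² = (1/(4√ρΛ) − κ·tanh(√ρT/2)) / (ΛT(√ρT − 2 tanh(√ρT/2))). -/

import Mathlib

/-!
Write `x = √ρ T / 2` and `t = tanh x`. The double-angle formulas give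
`coth (2x) = (1 + t²) / (2t)`, after which `A`, `B`, `C` are rational functions of `t` and the
identity is a matter of clearing denominators. The only denominators that need care are
`t` and `√ρ T - 2t = 2 (x - tanh x)`, which are positive because `0 < tanh x < x` for `x > 0`.
-/

open Real

namespace Real

theorem tanh_pos {x : ℝ} (hx : 0 < x) : 0 < tanh x := by
  rw [tanh_eq_sinh_div_cosh]
  exact div_pos (sinh_pos_iff.2 hx) (cosh_pos x)

theorem sinh_lt_mul_cosh {x : ℝ} (hx : 0 < x) : sinh x < x * cosh x := by
  -- `y cosh y - sinh y` vanishes at `0` and has derivative `y sinh y > 0` for `y > 0`.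
  have hmono : StrictMonoOn (fun y => y * cosh y - sinh y) (Set.Ici 0) := by
    refine strictMonoOn_of_deriv_pos (convex_Ici 0) (by fun_prop) fun y hy => ?_
    rw [interior_Ici, Set.mem_Ioi] at hy
    have hderiv : HasDerivAt (fun y => y * cosh y - sinh y)
        (1 * cosh y + y * sinh y - cosh y) y :=
      ((hasDerivAt_id y).mul (hasDerivAt_cosh y)).sub (hasDerivAt_sinh y)
    rw [hderiv.deriv]
    nlinarith [sinh_pos_iff.2 hy]
  simpa using hmono Set.self_mem_Ici (Set.mem_Ici.2 hx.le) hx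

theorem tanh_lt_self {x : ℝ} (hx : 0 < x) : tanh x < x := by
  rw [tanh_eq_sinh_div_cosh, div_lt_iff₀ (cosh_pos x)]
  exact sinh_lt_mul_cosh hx

theorem cosh_div_sinh_eq_tanh_half (x : ℝ) :
    cosh x / sinh x = (1 + tanh (x / 2) ^ 2) / (2 * tanh (x / 2)) := by
  have hcosh : cosh (x / 2) ≠ 0 := (cosh_pos _).ne'
  conv_lhs => rw [← mul_div_cancel₀ x (two_ne_zero' ℝ), cosh_two_mul, sinh_two_mul]
  rw [tanh_eq_sinh_div_cosh]
  field_simp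

end Real

theorem discriminant_identity_rational {s T Λ κ t : ℝ} (hs : s ≠ 0) (hT : T ≠ 0) (hΛ : Λ ≠ 0)
    (ht : t ≠ 0) (hD : s * T - 2 * t ≠ 0) :
    (κ - 1 / (2 * Λ * s) * ((1 + t ^ 2) / (2 * t) + t ^ 2 / (s * T - 2 * t))) *
        (1 / (2 * Λ * T) - s / (2 * Λ * (s * T - 2 * t))) -
      (t / (2 * Λ * (s * T - 2 * t))) ^ 2 =
      (1 / (4 * s * Λ) - κ * t) / (Λ * T * (s * T - 2 * t)) := by
  field_simp
  ring

theorem discriminant_identity_general (ρ T Λ κ : ℝ) (hρ : 0 < ρ) (hT : 0 < T) (hΛ : 0 < Λ)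
    (A B C : ℝ)
    (hA : A = κ - 1 / (2 * Λ * Real.sqrt ρ) *
      (cosh (Real.sqrt ρ * T) / sinh (Real.sqrt ρ * T)
        + tanh (Real.sqrt ρ * T / 2) ^ 2 /
          (Real.sqrt ρ * T - 2 * tanh (Real.sqrt ρ * T / 2))))
    (hB : B = 1 / (2 * Λ * T) - Real.sqrt ρ /
      (2 * Λ * (Real.sqrt ρ * T - 2 * tanh (Real.sqrt ρ * T / 2))))
    (hC : C = tanh (Real.sqrt ρ * T / 2) /
      (2 * Λ * (Real.sqrt ρ * T - 2 * tanh (Real.sqrt ρ * T / 2)))) :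
    A * B - C ^ 2 = (1 / (4 * Real.sqrt ρ * Λ) - κ * tanh (Real.sqrt ρ * T / 2)) /
      (Λ * T * (Real.sqrt ρ * T - 2 * tanh (Real.sqrt ρ * T / 2))) := by
  have hs : 0 < √ρ := sqrt_pos.2 hρ
  have hx : 0 < √ρ * T / 2 := by positivity
  have hD : 0 < √ρ * T - 2 * tanh (√ρ * T / 2) := by linarith [tanh_lt_self hx]
  rw [hA, hB, hC, cosh_div_sinh_eq_tanh_half]
  exact discriminant_identity_rational hs.ne' hT.ne' hΛ.ne' (tanh_pos hx).ne' hD.ne'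

theorem discriminant_identity (ρ T Λ κ : ℝ) (hρ : 0 < ρ) (hT : 0 < T) (hΛ : 0 < Λ)
    (hκ : κ ∈ Set.Ioo 0 (1 / (2 * ρ * Λ * T)))
    (A B C : ℝ)
    (hA : A = κ - 1 / (2 * Λ * Real.sqrt ρ) *
      (cosh (Real.sqrt ρ * T) / sinh (Real.sqrt ρ * T)
        + tanh (Real.sqrt ρ * T / 2) ^ 2 /
          (Real.sqrt ρ * T - 2 * tanh (Real.sqrt ρ * T / 2))))
    (hB : B = 1 / (2 * Λ * T) - Real.sqrt ρ /
      (2 * Λ * (Real.sqrt ρ * T - 2 * tanh (Real.sqrt ρ * T / 2))))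
    (hC : C = tanh (Real.sqrt ρ * T / 2) /
      (2 * Λ * (Real.sqrt ρ * T - 2 * tanh (Real.sqrt ρ * T / 2)))) :
    A * B - C ^ 2 = (1 / (4 * Real.sqrt ρ * Λ) - κ * tanh (Real.sqrt ρ * T / 2)) /
      (Λ * T * (Real.sqrt ρ * T - 2 * tanh (Real.sqrt ρ * T / 2))) :=
  discriminant_identity_general ρ T Λ κ hρ hT hΛ A B C hA hB hC
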